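/- arXiv:1712.03356 — 2 statements merged into one kernel-verified Lean document; each statement's English description precedes it below -/
import Mathlib

section
/- The representation of S_n on the subspace H^mult_μ of tensors of index-multiset type μ in (ℂ^n)^{⊗k} is isomorphic to (k!/∏_i (i!)^{m_i} m_i!) copies of the induced representation Ind_{S_l × S_{n−l}}^{S_n}(Reg_l × Id_{n−l}), where μ = (1^{m_1}2^{m_2}…), l = ∑ m_i, Reg_l is the regular representation of S_l, and Id_{n−l} is the trivial representation of S_{n−l}. -/
/-!
A basis tensor `e_f`, `f : Fin k → Fin n`, has type `μ` iff `f` factors as an injection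
`φ : Fin l ↪ Fin n` after a surjection `Fin k → Fin l` of type `μ`; the factorisation is unique up
to the free action of `S_l` on such surjections. So the basis of `H^mult_μ` is, `S_n`-equivariantly,
`Q × Inj(l, n)` with `Q` the set of `S_l`-orbits of surjections of type `μ`. Taking `n = l` gives
`|Q| · l!` surjections of type `μ`; on the other hand `S_k × S_l` acts transitively on them, and
the stabiliser of one of them has order `∏ (i!)^{m_i} · ∏ m_i!` (permutations inside its fibres,
then permutations of fibres of equal size). Hence `|Q| = c`.
-/

open Finset

/-- The multiset of multiplicities of the values of `f : Fin k → Fin n`. -/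
def fiberType (n k : ℕ) (f : Fin k → Fin n) : Multiset ℕ :=
  (Finset.univ.image f).val.map fun v => (Finset.univ.filter fun x => f x = v).card

/-- The subspace `H^mult_μ ⊆ (ℂ^n)^{⊗k}` spanned by the basis tensors whose index
multiset has type `μ`. -/
noncomputable def Hmult (n k : ℕ) (μ : Nat.Partition k) :
    Submodule ℂ ((Fin k → Fin n) → ℂ) :=
  Submodule.span ℂ {x | ∃ f : Fin k → Fin n, fiberType n k f = μ.parts ∧ x = Pi.single f 1}

open Function Equiv MulAction

section Fibers

variable {α β : Type*} [Fintype α] [DecidableEq β]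

def fiberCard (f : α → β) (b : β) : ℕ := #{a | f a = b}

theorem fiberCard_eq_card_subtype (f : α → β) (b : β) :
    fiberCard f b = Fintype.card {a // f a = b} :=
  (Fintype.card_subtype _).symm

theorem fiberCard_eq_count (f : α → β) (b : β) :
    fiberCard f b = (univ.val.map f).count b := by
  rw [Multiset.count_map, fiberCard]
  simp only [eq_comm]
  rfl

theorem exists_perm_comp_eq_iff {f g : α → β} :
    (∃ σ : Perm α, g ∘ σ = f) ↔ fiberCard f = fiberCard g := by
  constructor
  · rintro ⟨σ, rfl⟩
    ext b
    simp only [fiberCard_eq_card_subtype]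
    exact Fintype.card_congr (σ.subtypeEquiv fun _ => Iff.rfl)
  · intro h
    have e : ∀ b, {a // f a = b} ≃ {a // g a = b} := fun b =>
      Fintype.equivOfCardEq (by simpa only [fiberCard_eq_card_subtype] using congrFun h b)
    exact ⟨ofFiberEquiv e, funext (ofFiberEquiv_map e)⟩

theorem fiberCard_eq_iff_map_univ_eq {f g : α → β} :
    fiberCard f = fiberCard g ↔ univ.val.map f = univ.val.map g := by
  simp only [funext_iff, Multiset.ext, fiberCard_eq_count]

theorem fiberCard_perm_comp (τ : Perm β) (f : α → β) :
    fiberCard (τ ∘ f) = fiberCard f ∘ ⇑τ⁻¹ := by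
  ext b
  simp only [fiberCard, comp_apply, Perm.inv_def, ← eq_symm_apply]

theorem exists_fiberCard_eq [Fintype β] (a : β → ℕ) (ha : ∑ b, a b = Fintype.card α) :
    ∃ f : α → β, fiberCard f = a := by
  let e : α ≃ Σ b, Fin (a b) := Fintype.equivOfCardEq (by simp [ha])
  refine ⟨fun x => (e x).1, funext fun b => ?_⟩
  rw [fiberCard_eq_card_subtype,
    Fintype.card_congr (e.subtypeEquiv (q := fun s => s.1 = b) fun _ => Iff.rfl),
    Fintype.card_congr (Equiv.sigmaSubtype b), Fintype.card_fin]

end Fibers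

theorem Multiset.exists_map_univ_eq {γ : Type*} (M : Multiset γ) :
    ∃ a : Fin (Multiset.card M) → γ, univ.val.map a = M := by
  induction M using Quotient.inductionOn with
  | h L =>
    refine ⟨fun j => L.get j, ?_⟩
    rw [Fin.univ_val_map]
    exact congrArg ((↑) : List γ → Multiset γ) (List.ofFn_get L)

section TwoSidedAction

open Nat

variable {α β : Type*}

instance : MulAction (Perm α × Perm β) (α → β) where
  smul p f := p.2 ∘ f ∘ ⇑p.1⁻¹
  one_smul _ := rfl
  mul_smul _ _ _ := rfl

theorem perm_prod_smul_def (p : Perm α × Perm β) (f : α → β) : p • f = p.2 ∘ f ∘ ⇑p.1⁻¹ := rfl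

theorem comp_perm_inv_eq_self {γ : Type*} {g : β → γ} {τ : Perm β} (h : g ∘ τ = g) :
    g ∘ ⇑τ⁻¹ = g := by
  ext b
  simpa using (congrFun h (τ⁻¹ b)).symm

variable [Fintype α] [DecidableEq β]

theorem fiberCard_perm_prod_smul (p : Perm α × Perm β) (f : α → β) :
    fiberCard (p • f) = fiberCard f ∘ ⇑p.2⁻¹ := by
  rw [← fiberCard_perm_comp]
  exact exists_perm_comp_eq_iff.mp ⟨p.1⁻¹, rfl⟩

theorem mem_range_stabilizer_snd_iff (f₀ : α → β) (τ : Perm β) :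
    τ ∈ ((MonoidHom.snd (Perm α) (Perm β)).comp (stabilizer _ f₀).subtype).range ↔
      fiberCard f₀ ∘ τ = fiberCard f₀ := by
  constructor
  · rintro ⟨⟨p, hp⟩, rfl⟩
    have h := fiberCard_perm_prod_smul p f₀
    rw [mem_stabilizer_iff.mp hp] at h
    simpa using comp_perm_inv_eq_self h.symm
  · intro h
    obtain ⟨σ, hσ⟩ : ∃ σ : Perm α, (τ ∘ f₀) ∘ σ = f₀ := by
      rw [exists_perm_comp_eq_iff, fiberCard_perm_comp, comp_perm_inv_eq_self h]
    refine ⟨⟨(σ⁻¹, τ), ?_⟩, rfl⟩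
    rw [mem_stabilizer_iff, perm_prod_smul_def, inv_inv]
    exact hσ

theorem card_stabilizer_perm_prod (f₀ : α → β) :
    Nat.card (stabilizer (Perm α × Perm β) f₀) =
      Nat.card {σ : Perm α // f₀ ∘ σ = f₀} *
        Nat.card {τ : Perm β // fiberCard f₀ ∘ τ = fiberCard f₀} := by
  set π := (MonoidHom.snd (Perm α) (Perm β)).comp (stabilizer _ f₀).subtype
  have eker : π.ker ≃ {σ : Perm α // f₀ ∘ σ = f₀} :=
    { toFun := fun x => ⟨x.1.1.1⁻¹, by
        have hx : x.1.1 • f₀ = f₀ := x.1.2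
        rwa [perm_prod_smul_def, show x.1.1.2 = 1 from x.2] at hx⟩
      invFun := fun σ => ⟨⟨(σ.1⁻¹, 1), by
        rw [mem_stabilizer_iff, perm_prod_smul_def, inv_inv]
        exact σ.2⟩, rfl⟩
      left_inv := by
        rintro ⟨⟨⟨σ, τ⟩, hp⟩, hk⟩
        obtain rfl : τ = 1 := hk
        simp
      right_inv := fun σ => Subtype.ext (inv_inv σ.1) }
  rw [← π.ker.card_mul_index, Subgroup.index_ker, Nat.card_congr eker,
    Nat.card_congr (Equiv.subtypeEquivRight (mem_range_stabilizer_snd_iff f₀))]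

variable [Fintype β]

theorem mem_orbit_perm_prod_iff {f₀ f : α → β} :
    f ∈ orbit (Perm α × Perm β) f₀ ↔ fiberCard (fiberCard f) = fiberCard (fiberCard f₀) := by
  rw [← exists_perm_comp_eq_iff]
  constructor
  · rintro ⟨p, rfl⟩
    exact ⟨p.2⁻¹, (fiberCard_perm_prod_smul p f₀).symm⟩
  · rintro ⟨τ, hτ⟩
    obtain ⟨σ, hσ⟩ : ∃ σ : Perm α, (⇑τ⁻¹ ∘ f₀) ∘ σ = f := by
      rw [exists_perm_comp_eq_iff, fiberCard_perm_comp, inv_inv, hτ]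
    exact ⟨(σ⁻¹, τ⁻¹), by rw [← hσ]; rfl⟩

variable [DecidableEq α]

theorem card_map_fiberCard_eq_mul (f₀ : α → β) {M : Multiset ℕ}
    (hM : univ.val.map (fiberCard f₀) = M) :
    Nat.card {f : α → β // univ.val.map (fiberCard f) = M} *
        ((M.map (·!)).prod * ∏ i ∈ M.toFinset, (M.count i)!) =
      (Nat.card α)! * (Nat.card β)! := by
  have horbit : Nat.card {f : α → β // univ.val.map (fiberCard f) = M} =
      (orbit (Perm α × Perm β) f₀).ncard := by
    rw [← Nat.card_coe_set_eq]
    exact Nat.card_congr (Equiv.subtypeEquivRight fun f => by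
      rw [← hM, ← fiberCard_eq_iff_map_univ_eq, ← mem_orbit_perm_prod_iff])
  have hstab : Nat.card (stabilizer (Perm α × Perm β) f₀) =
      (M.map (·!)).prod * ∏ i ∈ M.toFinset, (M.count i)! := by
    rw [card_stabilizer_perm_prod, Nat.card_eq_fintype_card, DomMulAct.stabilizer_card,
      Nat.card_eq_fintype_card, DomMulAct.stabilizer_card', ← hM, Multiset.map_map]
    simp only [← fiberCard_eq_card_subtype, fiberCard_eq_count (fiberCard f₀)]
    rfl
  rw [horbit, ← hstab, ← index_stabilizer, mul_comm, Subgroup.card_mul_index, Nat.card_prod,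
    Nat.card_perm, Nat.card_perm]

end TwoSidedAction

section FiberType

open Nat

variable {n k : ℕ}

theorem fiberType_eq_map_fiberCard (f : Fin k → Fin n) :
    fiberType n k f = (univ.image f).val.map (fiberCard f) := rfl

theorem card_fiberType (f : Fin k → Fin n) :
    Multiset.card (fiberType n k f) = #(univ.image f) :=
  Multiset.card_map _ _

theorem fiberType_comp_of_injective {m : ℕ} {e : Fin m → Fin n} (he : Injective e)
    (f : Fin k → Fin m) : fiberType n k (e ∘ f) = fiberType m k f := by
  have hfib : ∀ v, fiberCard (e ∘ f) (e v) = fiberCard f v := fun v => by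
    simp only [fiberCard, comp_apply, he.eq_iff]
  rw [fiberType_eq_map_fiberCard, fiberType_eq_map_fiberCard, ← image_image,
    image_val_of_injOn he.injOn, Multiset.map_map]
  exact Multiset.map_congr rfl fun v _ => hfib v

theorem fiberType_of_surjective {f : Fin k → Fin n} (hf : Surjective f) :
    fiberType n k f = univ.val.map (fiberCard f) := by
  rw [fiberType_eq_map_fiberCard, image_univ_of_surjective hf]

theorem surjective_of_card_fiberType {f : Fin k → Fin n}
    (h : Multiset.card (fiberType n k f) = n) : Surjective f := by
  intro b
  have himage : univ.image f = univ :=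
    eq_univ_of_card _ (by rw [← card_fiberType, h, Fintype.card_fin])
  obtain ⟨a, -, ha⟩ := mem_image.mp (himage ▸ mem_univ b : b ∈ univ.image f)
  exact ⟨a, ha⟩

-- Either side forces `f` to be surjective: `μ` has `l` parts, all of them positive.
theorem fiberType_eq_parts_iff (μ : Nat.Partition k) {l : ℕ} (hl : l = Multiset.card μ.parts)
    (f : Fin k → Fin l) :
    fiberType l k f = μ.parts ↔ univ.val.map (fiberCard f) = μ.parts := by
  constructor
  · intro h
    rwa [← fiberType_of_surjective (surjective_of_card_fiberType (by rw [h, hl]))]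
  · intro h
    suffices hf : Surjective f by rwa [fiberType_of_surjective hf]
    intro b
    have hpos : 0 < fiberCard f b :=
      μ.parts_pos (h ▸ Multiset.mem_map_of_mem _ (mem_univ_val b))
    obtain ⟨a, ha⟩ := card_pos.mp hpos
    exact ⟨a, (mem_filter.mp ha).2⟩

def fiberTypeSubMulAction (μ : Nat.Partition k) (n : ℕ) :
    SubMulAction (Perm (Fin n)) (Fin k → Fin n) where
  carrier := {f | fiberType n k f = μ.parts}
  smul_mem' τ _ hf := (fiberType_comp_of_injective τ.injective _).trans hf

theorem mem_fiberTypeSubMulAction {μ : Nat.Partition k} {f : Fin k → Fin n} :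
    f ∈ fiberTypeSubMulAction μ n ↔ fiberType n k f = μ.parts := Iff.rfl

theorem Nat.Partition.exists_map_fiberCard_eq (μ : Nat.Partition k) :
    ∃ f : Fin k → Fin (Multiset.card μ.parts), univ.val.map (fiberCard f) = μ.parts := by
  obtain ⟨a, ha⟩ := μ.parts.exists_map_univ_eq
  have hsum : (univ.val.map a).sum = k := by rw [ha, μ.parts_sum]
  obtain ⟨f, hf⟩ := exists_fiberCard_eq (α := Fin k) a (hsum.trans (Fintype.card_fin k).symm)
  exact ⟨f, hf ▸ ha⟩

theorem Nat.Partition.prod_factorial_count_eq (μ : Nat.Partition k) :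
    ∏ i ∈ range (k + 1), (i ! ^ μ.parts.count i * (μ.parts.count i)!) =
      (μ.parts.map (·!)).prod * ∏ i ∈ μ.parts.toFinset, (μ.parts.count i)! := by
  have hsub : μ.parts.toFinset ⊆ range (k + 1) := fun i hi => by
    rw [Multiset.mem_toFinset] at hi
    exact mem_range_succ_iff.mpr (μ.parts_sum ▸ Multiset.le_sum_of_mem hi)
  rw [prod_mul_distrib, prod_multiset_map_count]
  congr 1 <;> refine (prod_subset hsub fun i _ hi => ?_).symm <;>
    rw [Multiset.count_eq_zero.mpr (Multiset.mem_toFinset.not.mp hi)] <;> rfl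

theorem card_fiberTypeSubMulAction_mul_prod {l : ℕ} (μ : Nat.Partition k)
    (hl : l = Multiset.card μ.parts) :
    Nat.card (fiberTypeSubMulAction μ l) *
        ∏ i ∈ range (k + 1), (i ! ^ μ.parts.count i * (μ.parts.count i)!) =
      k ! * l ! := by
  subst hl
  obtain ⟨f₀, hf₀⟩ := μ.exists_map_fiberCard_eq
  rw [μ.prod_factorial_count_eq, Nat.card_congr (Equiv.subtypeEquivRight fun f =>
    mem_fiberTypeSubMulAction.trans (fiberType_eq_parts_iff μ rfl f)),
    card_map_fiberCard_eq_mul f₀ hf₀, Nat.card_fin, Nat.card_fin]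

end FiberType

section Factorization

variable {α β γ : Type*}

theorem exists_perm_comp_eq_of_forall_eq_iff [Finite β] {f g : α → β} (hf : Surjective f)
    (h : ∀ x y, f x = f y ↔ g x = g y) : ∃ τ : Perm β, τ ∘ f = g := by
  have hinj : Injective (g ∘ surjInv hf) := fun b b' hb => by
    rwa [← surjInv_eq hf b, ← surjInv_eq hf b', h]
  refine ⟨Equiv.ofBijective _ (Finite.injective_iff_bijective.mp hinj), funext fun x => ?_⟩
  exact (h _ _).mp (surjInv_eq hf (f x))

theorem exists_embedding_comp_eq [Fintype α] [Fintype β] [DecidableEq γ] (f : α → γ)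
    (h : #(univ.image f) = Fintype.card β) : ∃ (f₀ : α → β) (φ : β ↪ γ), φ ∘ f₀ = f := by
  let e : β ≃ univ.image f := Fintype.equivOfCardEq (by rw [Fintype.card_coe, h])
  refine ⟨fun a => e.symm ⟨f a, mem_image_of_mem f (mem_univ a)⟩,
    e.toEmbedding.trans (Embedding.subtype _), funext fun a => ?_⟩
  simp

end Factorization

section Decomposition

variable {k l n : ℕ} {μ : Nat.Partition k}

theorem surjective_of_mem_fiberTypeSubMulAction (hl : l = Multiset.card μ.parts)
    (f : fiberTypeSubMulAction μ l) : Surjective (f : Fin k → Fin l) :=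
  surjective_of_card_fiberType (by rw [mem_fiberTypeSubMulAction.mp f.2, hl])

noncomputable def compOrbitOut
    (p : orbitRel.Quotient (Perm (Fin l)) (fiberTypeSubMulAction μ l) × (Fin l ↪ Fin n)) :
    fiberTypeSubMulAction μ n :=
  ⟨p.2 ∘ p.1.out, (fiberType_comp_of_injective p.2.injective _).trans p.1.out.2⟩

theorem compOrbitOut_injective (hl : l = Multiset.card μ.parts) :
    Injective (compOrbitOut (μ := μ) (l := l) (n := n)) := by
  rintro ⟨q, φ⟩ ⟨q', φ'⟩ h
  have hval : φ ∘ q.out.1 = φ' ∘ q'.out.1 := congrArg Subtype.val h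
  have hker : ∀ x y, q.out.1 x = q.out.1 y ↔ q'.out.1 x = q'.out.1 y := fun x y => by
    rw [← φ.injective.eq_iff, ← φ'.injective.eq_iff]
    have hx := congrFun hval x
    have hy := congrFun hval y
    simp only [comp_apply] at hx hy
    rw [hx, hy]
  obtain ⟨τ, hτ⟩ :=
    exists_perm_comp_eq_of_forall_eq_iff (surjective_of_mem_fiberTypeSubMulAction hl _) hker
  obtain rfl : q' = q := by
    rw [← q.out_eq, ← q'.out_eq]
    exact Quotient.sound ⟨τ, Subtype.ext hτ⟩
  obtain rfl : φ = φ' := by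
    ext j
    obtain ⟨x, rfl⟩ := surjective_of_mem_fiberTypeSubMulAction hl q'.out j
    exact congrArg Fin.val (congrFun hval x)
  rfl

theorem compOrbitOut_surjective (hl : l = Multiset.card μ.parts) :
    Surjective (compOrbitOut (μ := μ) (l := l) (n := n)) := by
  rintro ⟨f, hf⟩
  obtain ⟨f₀, φ, rfl⟩ := exists_embedding_comp_eq (β := Fin l) f
    (by rw [← card_fiberType, mem_fiberTypeSubMulAction.mp hf, Fintype.card_fin, hl])
  have hf₀ : f₀ ∈ fiberTypeSubMulAction μ l :=
    (fiberType_comp_of_injective φ.injective f₀).symm.trans hf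
  let x₀ : fiberTypeSubMulAction μ l := ⟨f₀, hf₀⟩
  obtain ⟨τ, hτ⟩ := Quotient.mk_out (s := orbitRel (Perm (Fin l)) _) x₀
  refine ⟨(⟦x₀⟧, (τ⁻¹ : Perm (Fin l)).toEmbedding.trans φ), Subtype.ext ?_⟩
  show φ ∘ ⇑τ⁻¹ ∘ _ = φ ∘ f₀
  rw [← hτ]
  ext x
  simp [x₀]

theorem compOrbitOut_bijective (hl : l = Multiset.card μ.parts) :
    Bijective (compOrbitOut (μ := μ) (l := l) (n := n)) :=
  ⟨compOrbitOut_injective hl, compOrbitOut_surjective hl⟩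

end Decomposition

section Multiplicity

open Nat

variable {k l : ℕ} {μ : Nat.Partition k}

theorem card_orbitRel_quotient_mul_prod (hl : l = Multiset.card μ.parts) :
    Nat.card (orbitRel.Quotient (Perm (Fin l)) (fiberTypeSubMulAction μ l)) *
        ∏ i ∈ range (k + 1), (i ! ^ μ.parts.count i * (μ.parts.count i)!) = k ! := by
  have h := card_fiberTypeSubMulAction_mul_prod μ hl
  rw [← Nat.card_congr (Equiv.ofBijective _ (compOrbitOut_bijective hl)), Nat.card_prod,
    Nat.card_eq_fintype_card (α := Fin l ↪ Fin l), Fintype.card_embedding_eq, Fintype.card_fin,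
    descFactorial_self, mul_right_comm] at h
  exact Nat.eq_of_mul_eq_mul_right (factorial_pos l) h

theorem card_orbitRel_quotient (hl : l = Multiset.card μ.parts) {c : ℕ}
    (hc : c * ∏ i ∈ range (k + 1), (i ! ^ μ.parts.count i * (μ.parts.count i)!) = k !) :
    Nat.card (orbitRel.Quotient (Perm (Fin l)) (fiberTypeSubMulAction μ l)) = c :=
  Nat.eq_of_mul_eq_mul_right (by positivity) ((card_orbitRel_quotient_mul_prod hl).trans hc.symm)

end Multiplicity

section SpanSingle

variable {ι R : Type*} [Fintype ι] [DecidableEq ι] [Semiring R]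

theorem mem_span_pi_single_iff {p : ι → Prop} {x : ι → R} :
    x ∈ Submodule.span R {y | ∃ i, p i ∧ y = Pi.single i 1} ↔ ∀ i, ¬p i → x i = 0 := by
  constructor
  · intro hx i hi
    induction hx using Submodule.span_induction with
    | mem y hy =>
      obtain ⟨j, hj, rfl⟩ := hy
      exact Pi.single_eq_of_ne (by rintro rfl; exact hi hj) 1
    | zero => rfl
    | add y z _ _ hy hz => simp [hy, hz]
    | smul a y _ hy => simp [hy]
  · intro hx
    rw [pi_eq_sum_univ' x]
    refine Submodule.sum_mem _ fun i _ => ?_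
    by_cases hi : p i
    · exact Submodule.smul_mem _ _ (Submodule.subset_span ⟨i, hi, rfl⟩)
    · rw [hx i hi, zero_smul]
      exact Submodule.zero_mem _

noncomputable def spanPiSingleEquiv (p : ι → Prop) [DecidablePred p] :
    Submodule.span R {y : ι → R | ∃ i, p i ∧ y = Pi.single i 1} ≃ₗ[R] ({i // p i} → R) where
  toFun x i := (x : ι → R) i
  map_add' _ _ := rfl
  map_smul' _ _ := rfl
  invFun y := ⟨fun i => if h : p i then y ⟨i, h⟩ else 0,
    mem_span_pi_single_iff.mpr fun _ hi => dif_neg hi⟩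
  left_inv x := by
    ext i
    by_cases hi : p i
    · simp [hi]
    · simp [hi, mem_span_pi_single_iff.mp x.2 i hi]
  right_inv y := funext fun i => dif_pos i.2

end SpanSingle

theorem stmt2_general (n k : ℕ) (μ : Nat.Partition k) (l : ℕ) (hl : l = μ.parts.card)
    (c : ℕ)
    (hc : c * ∏ i ∈ Finset.range (k + 1),
        (Nat.factorial i ^ μ.parts.count i * Nat.factorial (μ.parts.count i))
      = Nat.factorial k) :
    ∃ e : ↥(Hmult n k μ) ≃ₗ[ℂ] (Fin c → (Fin l ↪ Fin n) → ℂ),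
      ∀ (g : Equiv.Perm (Fin n)) (x y : ↥(Hmult n k μ)),
        ((y : (Fin k → Fin n) → ℂ) = fun f => (x : (Fin k → Fin n) → ℂ) (⇑g⁻¹ ∘ f)) →
        ∀ (j : Fin c) (φ : Fin l ↪ Fin n),
          e y j φ = e x j (φ.trans g⁻¹.toEmbedding) := by
  let eQ := (Finite.equivFin _).trans (finCongr (card_orbitRel_quotient hl hc))
  let E : Fin c × (Fin l ↪ Fin n) ≃ fiberTypeSubMulAction μ n :=
    (eQ.symm.prodCongr (Equiv.refl _)).trans (Equiv.ofBijective _ (compOrbitOut_bijective hl))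
  refine ⟨(spanPiSingleEquiv _).trans
    ((LinearEquiv.funCongrLeft ℂ ℂ E).trans (LinearEquiv.curry ℂ ℂ _ _)), ?_⟩
  intro g x y hxy j φ
  change y.1 (E (j, φ)) = x.1 (E (j, φ.trans g⁻¹.toEmbedding))
  rw [hxy]
  rfl

/-- The `S_n`-representation on `H^mult_μ` is isomorphic to
`(k!/∏_i (i!)^{m_i} m_i!)` copies of `Ind_{S_l × S_{n-l}}^{S_n}(Reg_l × Id_{n-l})`,
where `l = l(μ)`.  The induced representation is modelled concretely as the
permutation module `ℂ[Inj(Fin l, Fin n)]` on injections (= `ℂ[S_n] ⊗_{S_l × S_{n-l}}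
(ℂ[S_l] ⊠ triv)`), with `S_n` acting by postcomposition `φ ↦ g ∘ φ`.  The
multiplicity `c = k!/∏_i (i!)^{m_i} m_i!` is specified division-free by `hc`. -/
theorem stmt2 (n k : ℕ) (μ : Nat.Partition k) (l : ℕ) (hl : l = μ.parts.card)
    (hln : l ≤ n) (c : ℕ)
    (hc : c * ∏ i ∈ Finset.range (k + 1),
        (Nat.factorial i ^ μ.parts.count i * Nat.factorial (μ.parts.count i))
      = Nat.factorial k) :
    ∃ e : ↥(Hmult n k μ) ≃ₗ[ℂ] (Fin c → (Fin l ↪ Fin n) → ℂ),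
      ∀ (g : Equiv.Perm (Fin n)) (x y : ↥(Hmult n k μ)),
        ((y : (Fin k → Fin n) → ℂ) = fun f => (x : (Fin k → Fin n) → ℂ) (⇑g⁻¹ ∘ f)) →
        ∀ (j : Fin c) (φ : Fin l ↪ Fin n),
          e y j φ = e x j (φ.trans g⁻¹.toEmbedding) :=
  stmt2_general n k μ l hl c hc
end

section
/- Let T be a standard Young tableau of shape ν ⊢ k with column antisymmetrizer b_T = ∑_{σ ∈ C(T)} sgn(σ)σ, and let {T'} be a tabloid of shape μ ⊢ k. If ν does not dominate μ, then there exist two entries lying in the same row of T' and in the same column of T; consequently {T'}·b_T = 0. -/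
open Finset

/-- The parts of a partition as a list, sorted in decreasing order. -/
def sortedParts {k : ℕ} (μ : Nat.Partition k) : List ℕ :=
  (μ.parts.sort (· ≤ ·)).reverse

/-- `T : Fin k → ℕ × ℕ` is a (bijective) filling of the Young diagram with row
lengths given by the list `P`: cells are pairs `(row, column)` (0-indexed). -/
def IsShape (k : ℕ) (P : List ℕ) (T : Fin k → ℕ × ℕ) : Prop :=
  Function.Injective T ∧ Set.range T = {c : ℕ × ℕ | c.2 < P.getD c.1 0}

/-- `T` is standard: entries increase along each row and down each column. -/
def IsStandard (k : ℕ) (T : Fin k → ℕ × ℕ) : Prop :=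
  (∀ x y : Fin k, (T x).1 = (T y).1 → (T x).2 < (T y).2 → x < y) ∧
  (∀ x y : Fin k, (T x).2 = (T y).2 → (T x).1 < (T y).1 → x < y)

/-- The column stabilizer `C(T)` of a filling `T`. -/
def colStab (k : ℕ) (T : Fin k → ℕ × ℕ) : Finset (Equiv.Perm (Fin k)) :=
  Finset.univ.filter fun σ => ∀ x, (T (σ x)).2 = (T x).2

/-- Sum of the `i` largest parts of a multiset of natural numbers. -/
def largestSum (m : Multiset ℕ) (i : ℕ) : ℕ :=
  ((m.sort (· ≤ ·)).drop (Multiset.card m - i)).sum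

/-- The dominance order on partitions of `k`: `ν ⊵ μ`. -/
def Dominates {k : ℕ} (ν μ : Nat.Partition k) : Prop :=
  ∀ i, largestSum μ.parts i ≤ largestSum ν.parts i

/-
The tabloid `{T'}` is its row function `r`, on which `σ` acts by `r ↦ r ∘ σ⁻¹`.

Suppose no two entries sharing a row of `T'` share a column of `T`. Then in each column `c` of
`T` the entries lying in the first `i` rows of `T'` lie in pairwise distinct rows of `T'`, so
there are at most `min i (colLen c)` of them, which is exactly the number of cells of column `c`
in the first `i` rows of `ν`. Summing over the columns gives `μ_1 + ⋯ + μ_i ≤ ν_1 + ⋯ + ν_i`,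
i.e. `ν ⊵ μ`. Given entries `x ≠ y` sharing a row of `T'` and a column of `T`, the
transposition `(x y)` lies in `C(T)` and fixes `{T'}`, so `σ ↦ σ (x y)` pairs off the terms of
`{T'}·b_T` with opposite signs.
-/
lemma List.sum_take_eq_sum_range_getD (l : List ℕ) (i : ℕ) :
    (l.take i).sum = ∑ j ∈ Finset.range i, l.getD j 0 := by
  induction l generalizing i with
  | nil => simp
  | cons a l ih =>
    cases i with
    | zero => simp
    | succ n => rw [Finset.sum_range_succ']; simp [ih, add_comm]

lemma sortedParts_sortedGE {k : ℕ} (μ : Nat.Partition k) : (sortedParts μ).SortedGE :=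
  (List.Pairwise.sortedLE (Multiset.pairwise_sort _ _)).reverse

lemma largestSum_eq_sum_range_getD {k : ℕ} (μ : Nat.Partition k) (i : ℕ) :
    largestSum μ.parts i = ∑ j ∈ range i, (sortedParts μ).getD j 0 := by
  rw [← List.sum_take_eq_sum_range_getD, ← List.sum_reverse, sortedParts, List.reverse_take,
    List.reverse_reverse, List.length_reverse, Multiset.length_sort]
  rfl

lemma largestSum_eq_card_filter_lt {k : ℕ} {α : Type*} [Fintype α] {μ : Nat.Partition k}
    {f : α → ℕ} (hf : ∀ j, #{x | f x = j} = (sortedParts μ).getD j 0) (i : ℕ) :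
    largestSum μ.parts i = #{x | f x < i} := by
  rw [largestSum_eq_sum_range_getD, card_eq_sum_card_fiberwise (f := f) (t := range i)
    (fun x hx => by simpa using hx)]
  refine sum_congr rfl fun j hj => ?_
  rw [← hf, filter_filter]
  congr 1
  ext x
  simp only [mem_filter, mem_univ, true_and]
  exact ⟨fun h => ⟨h ▸ mem_range.mp hj, h⟩, And.right⟩

namespace YoungDiagram

lemma mem_ofRowLens_iff_lt_getD {w : List ℕ} {hw : w.SortedGE} {i j : ℕ} :
    (i, j) ∈ ofRowLens w hw ↔ j < w.getD i 0 := by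
  rw [mem_ofRowLens]
  by_cases h : i < w.length
  · simp [h]
  · simp [h]

lemma rowLen_ofRowLens_eq_getD (w : List ℕ) (hw : w.SortedGE) (i : ℕ) :
    (ofRowLens w hw).rowLen i = w.getD i 0 :=
  eq_of_forall_lt_iff fun j => by rw [← mem_iff_lt_rowLen, mem_ofRowLens_iff_lt_getD]

end YoungDiagram

lemma IsShape.range_eq_ofRowLens {k : ℕ} {w : List ℕ} (hw : w.SortedGE) {T : Fin k → ℕ × ℕ}
    (hT : IsShape k w T) : Set.range T = (YoungDiagram.ofRowLens w hw).cells := by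
  ext ⟨i, j⟩
  rw [hT.2, Finset.mem_coe, YoungDiagram.mem_cells, YoungDiagram.mem_ofRowLens_iff_lt_getD]
  rfl

lemma card_filter_comp_eq_of_range_eq {α β : Type*} [Fintype α] {T : α → β}
    (hinj : Function.Injective T) {s : Finset β} (hrange : Set.range T = s)
    (q : β → Prop) [DecidablePred q] : #{x | q (T x)} = #(s.filter q) := by
  have hs : univ.map ⟨T, hinj⟩ = s := by
    apply Finset.coe_injective
    simp [← hrange]
  rw [← hs, filter_map, card_map]
  rfl

section Filling

variable {α : Type*} [Fintype α] {Y : YoungDiagram} {T : α → ℕ × ℕ}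

lemma card_filter_fst_eq (hinj : Function.Injective T) (hrange : Set.range T = Y.cells)
    (i : ℕ) : #{x | (T x).1 = i} = Y.rowLen i := by
  rw [card_filter_comp_eq_of_range_eq hinj hrange (fun c => c.1 = i), Y.rowLen_eq_card]
  rfl

lemma card_filter_snd_eq (hinj : Function.Injective T) (hrange : Set.range T = Y.cells)
    (j : ℕ) : #{x | (T x).2 = j} = Y.colLen j := by
  rw [card_filter_comp_eq_of_range_eq hinj hrange (fun c => c.2 = j), Y.colLen_eq_card]
  rfl

lemma card_filter_fst_lt_and_snd_eq (hinj : Function.Injective T)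
    (hrange : Set.range T = Y.cells) (i j : ℕ) :
    #{x | (T x).1 < i ∧ (T x).2 = j} = min i (Y.colLen j) := by
  rw [card_filter_comp_eq_of_range_eq hinj hrange (fun c => c.1 < i ∧ c.2 = j)]
  have : Y.cells.filter (fun c => c.1 < i ∧ c.2 = j) = range (min i (Y.colLen j)) ×ˢ {j} := by
    ext ⟨a, b⟩
    simp only [mem_filter, YoungDiagram.mem_cells, mem_product, mem_range, mem_singleton,
      lt_min_iff, YoungDiagram.mem_iff_lt_colLen]
    constructor
    · rintro ⟨h, ha, rfl⟩
      exact ⟨⟨ha, h⟩, rfl⟩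
    · rintro ⟨⟨ha, h⟩, rfl⟩
      exact ⟨h, ha, rfl⟩
  rw [this, card_product, card_range, card_singleton, mul_one]

lemma card_filter_lt_le_of_injective_on_columns (hinj : Function.Injective T)
    (hrange : Set.range T = Y.cells) {r : α → ℕ}
    (hr : ∀ x y, r x = r y → (T x).2 = (T y).2 → x = y) (i : ℕ) :
    #{x | r x < i} ≤ #{x | (T x).1 < i} := by
  let cols := univ.image fun x => (T x).2
  have hmaps (p : α → Prop) [DecidablePred p] :
      Set.MapsTo (fun x => (T x).2) ({x | p x} : Finset α) cols :=
    fun x _ => mem_image_of_mem _ (mem_univ x)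
  rw [card_eq_sum_card_fiberwise (hmaps _), card_eq_sum_card_fiberwise (hmaps _)]
  refine sum_le_sum fun j _ => ?_
  simp only [filter_filter]
  rw [card_filter_fst_lt_and_snd_eq hinj hrange]
  refine le_min ?_ ?_
  · calc #{x | r x < i ∧ (T x).2 = j} ≤ #(range i) :=
          card_le_card_of_injOn r (fun x hx => by simp_all)
            (fun x hx y hy hxy => hr x y hxy (by simp_all))
      _ = i := card_range i
  · calc #{x | r x < i ∧ (T x).2 = j} ≤ #{x | (T x).2 = j} :=
          card_le_card fun x => by simp only [mem_filter, mem_univ, true_and]; exact And.right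
      _ = Y.colLen j := card_filter_snd_eq hinj hrange j

end Filling

lemma dominates_of_injective_on_columns {k : ℕ} {μ ν : Nat.Partition k} {T : Fin k → ℕ × ℕ}
    (hT : IsShape k (sortedParts ν) T) {r : Fin k → ℕ}
    (hr : ∀ i, #{x | r x = i} = (sortedParts μ).getD i 0)
    (hcol : ∀ x y, r x = r y → (T x).2 = (T y).2 → x = y) : Dominates ν μ := by
  have hrange := hT.range_eq_ofRowLens (sortedParts_sortedGE ν)
  have hrows (j : ℕ) : #{x | (T x).1 = j} = (sortedParts ν).getD j 0 := by
    rw [card_filter_fst_eq hT.1 hrange, YoungDiagram.rowLen_ofRowLens_eq_getD]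
  intro i
  rw [largestSum_eq_card_filter_lt hr, largestSum_eq_card_filter_lt hrows]
  exact card_filter_lt_le_of_injective_on_columns hT.1 hrange hcol i

lemma Equiv.comp_swap_eq_self {α β : Type*} [DecidableEq α] {f : α → β} {x y : α}
    (h : f x = f y) : f ∘ Equiv.swap x y = f := by
  rw [Equiv.comp_swap_eq_update, h, Function.update_eq_self, ← h, Function.update_eq_self]

lemma mul_swap_mem_colStab {k : ℕ} {T : Fin k → ℕ × ℕ} {x y : Fin k} (hxy : (T x).2 = (T y).2)
    {σ : Equiv.Perm (Fin k)} (hσ : σ ∈ colStab k T) : σ * Equiv.swap x y ∈ colStab k T := by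
  simp only [colStab, mem_filter, mem_univ, true_and] at hσ ⊢
  intro z
  rw [Equiv.Perm.mul_apply, hσ]
  exact congrFun (Equiv.comp_swap_eq_self (f := fun z => (T z).2) hxy) z

lemma sum_sign_smul_eq_zero_of_mul_swap {α R M : Type*} [DecidableEq α] [Fintype α] [Ring R]
    [AddCommGroup M] [Module R M] {S : Finset (Equiv.Perm α)} {F : Equiv.Perm α → M} {x y : α}
    (hxy : x ≠ y) (hS : ∀ σ ∈ S, σ * Equiv.swap x y ∈ S)
    (hF : ∀ σ, F (σ * Equiv.swap x y) = F σ) :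
    ∑ σ ∈ S, ((Equiv.Perm.sign σ : ℤ) : R) • F σ = 0 := by
  refine sum_involution (fun σ _ => σ * Equiv.swap x y) (fun σ _ => ?_) (fun σ _ _ h => ?_) hS
    (fun σ _ => by simp [mul_assoc])
  · simp [hF, Equiv.Perm.sign_swap hxy]
  · exact hxy (Equiv.swap_eq_one_iff.mp (mul_eq_left.mp h))

theorem stmt3_general (k : ℕ) (μ ν : Nat.Partition k)
    (T : Fin k → ℕ × ℕ) (hT : IsShape k (sortedParts ν) T)
    (r : Fin k → ℕ)
    (hr : ∀ i, (Finset.univ.filter fun x => r x = i).card = (sortedParts μ).getD i 0)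
    (hdom : ¬ Dominates ν μ) :
    (∃ x y : Fin k, x ≠ y ∧ r x = r y ∧ (T x).2 = (T y).2) ∧
    (∑ σ ∈ colStab k T,
        ((Equiv.Perm.sign σ : ℤ) : ℂ) • Finsupp.single (r ∘ ⇑σ⁻¹) (1 : ℂ))
      = (0 : (Fin k → ℕ) →₀ ℂ) := by
  have hpair : ∃ x y : Fin k, x ≠ y ∧ r x = r y ∧ (T x).2 = (T y).2 := by
    by_contra! hsep
    exact hdom (dominates_of_injective_on_columns hT hr fun x y hrxy hcol =>
      by_contra fun hxy => hsep x y hxy hrxy hcol)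
  obtain ⟨x, y, hxy, hrxy, hcol⟩ := hpair
  refine ⟨⟨x, y, hxy, hrxy, hcol⟩, sum_sign_smul_eq_zero_of_mul_swap hxy
    (fun σ => mul_swap_mem_colStab hcol) fun σ => ?_⟩
  rw [mul_inv_rev, Equiv.swap_inv, Equiv.Perm.coe_mul, ← Function.comp_assoc,
    Equiv.comp_swap_eq_self hrxy]

/-- Key combinatorial lemma for upper triangularity.  Let `T` be a standard Young
tableau of shape `ν ⊢ k` and let `{T'}` be a tabloid of shape `μ ⊢ k`, encoded by
its row function `r : Fin k → ℕ` (entry `x` lies in row `r x`, rows having sizes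
`μ_0 ≥ μ_1 ≥ …`).  If `ν` does not dominate `μ`, then some two entries lie in the
same row of `T'` and in the same column of `T`; consequently
`{T'}·b_T = ∑_{σ ∈ C(T)} sgn(σ) {σ T'} = 0` in the free `ℂ`-module on tabloids. -/
theorem stmt3 (k : ℕ) (μ ν : Nat.Partition k)
    (T : Fin k → ℕ × ℕ) (hT : IsShape k (sortedParts ν) T) (hstd : IsStandard k T)
    (r : Fin k → ℕ)
    (hr : ∀ i, (Finset.univ.filter fun x => r x = i).card = (sortedParts μ).getD i 0)
    (hdom : ¬ Dominates ν μ) :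
    (∃ x y : Fin k, x ≠ y ∧ r x = r y ∧ (T x).2 = (T y).2) ∧
    (∑ σ ∈ colStab k T,
        ((Equiv.Perm.sign σ : ℤ) : ℂ) • Finsupp.single (r ∘ ⇑σ⁻¹) (1 : ℂ))
      = (0 : (Fin k → ℕ) →₀ ℂ) :=
  stmt3_general k μ ν T hT r hr hdom
end
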